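/- Let γ > 1, κ ∈ ℝ, let u₀ ∈ ℝ^d, B₀ ∈ ℝ^d, p₀ ∈ ℝ be constants, and let ρ : ℝ^d × (0,∞) → ℝ be positive, twice continuously differentiable in space and continuously differentiable in time, satisfying the unregularized mass equation ∂_t ρ + ∇·(ρ u₀) = 0. Define E := p₀/(γ−1) + ρ|u₀|²/2 + |B₀|²/2, u := u₀, p := p₀, 𝒯 := B₀ ⊗ B₀ − (|B₀|²/2)I, and temperature T := p₀/ρ. Then the residual of the resistive-MHD energy equation satisfies, at every point, ∂_t E + ∇·(u(E+p)) − ∇·(u·𝒯) − ∇·(κ∇T) = ∇·(κ p₀ ρ⁻² ∇ρ). In particular, the resistive-MHD energy equation with constant u₀, p₀, B₀ holds for all such ρ only if κ = 0, so the resistive MHD flux with nonzero thermal diffusivity is not compatible with contact waves. -/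

import Mathlib

/-!
For a contact wave the energy `E` is affine in `ρ` with slope `|u₀|²/2`, so the mass equation
makes `∂ₜE + ∇·(u₀(E + p₀))` vanish, and the Maxwell flux `u₀·𝒯` is constant. What remains is
the heat flux: by the chain rule `∇(p₀/ρ) = -p₀ ρ⁻² ∇ρ`, which is the stated residual.
-/

open scoped BigOperators

/-- Spatial partial derivative `∂_i f (x)` of a scalar field on `ℝ^d`. -/
noncomputable def spd {d : ℕ} (f : (Fin d → ℝ) → ℝ) (i : Fin d) (x : Fin d → ℝ) : ℝ :=
  fderiv ℝ f x (Pi.single i 1)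

/-- The Maxwell stress tensor `𝒯 = B ⊗ B − (|B|²/2) I` built from a vector `B ∈ ℝ^d`. -/
noncomputable def maxwellT {d : ℕ} (B : Fin d → ℝ) (i j : Fin d) : ℝ :=
  B i * B j - (if i = j then (∑ k, (B k) ^ 2) / 2 else 0)

section spd

variable {d : ℕ} (f : (Fin d → ℝ) → ℝ) (i : Fin d) (x : Fin d → ℝ)

theorem spd_const (c : ℝ) : spd (fun _ => c) i x = 0 := by
  simp [spd]

theorem spd_add_const (c : ℝ) : spd (fun y => f y + c) i x = spd f i x := by
  simp [spd, fderiv_add_const]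

theorem spd_const_add (c : ℝ) : spd (fun y => c + f y) i x = spd f i x := by
  simp [spd, fderiv_const_add]

theorem spd_const_mul (c : ℝ) : spd (fun y => c * f y) i x = c * spd f i x := by
  change fderiv ℝ (c • f) x _ = _
  simp [fderiv_const_smul_field, spd]

theorem spd_mul_const (c : ℝ) : spd (fun y => f y * c) i x = spd f i x * c := by
  simpa only [mul_comm _ c] using spd_const_mul f i x c

theorem spd_neg : spd (fun y => -f y) i x = -spd f i x := by
  simp [spd, fderiv_fun_neg]

theorem spd_const_div {f : (Fin d → ℝ) → ℝ} {x : Fin d → ℝ} (hf : DifferentiableAt ℝ f x)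
    (hx : f x ≠ 0) (c : ℝ) :
    spd (fun y => c / f y) i x = -(c * (f x)⁻¹ ^ 2 * spd f i x) := by
  have hg : HasDerivAt (fun r : ℝ => c / r) (-(c * (f x)⁻¹ ^ 2)) (f x) := by
    simpa [div_eq_mul_inv, inv_pow] using (hasDerivAt_inv hx).const_mul c
  have h := (hg.hasFDerivAt.comp x hf.hasFDerivAt).fderiv
  simp only [spd, Function.comp_def] at h ⊢
  simp [h]
  ring

end spd

theorem stmt_17_general {d : ℕ} (γ κ : ℝ)
    (u₀ B₀ : Fin d → ℝ) (p₀ : ℝ)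
    (ρ : (Fin d → ℝ) → ℝ → ℝ)
    (hρpos : ∀ x t, 0 < ρ x t)
    (hρx : ∀ t, ContDiff ℝ 2 fun x => ρ x t)
    (hmass : ∀ (x : Fin d → ℝ) (t : ℝ), 0 < t →
      deriv (fun τ => ρ x τ) t + (∑ j, spd (fun y => ρ y t * u₀ j) j x) = 0) :
    ∀ (x : Fin d → ℝ) (t : ℝ), 0 < t →
      deriv (fun τ => p₀ / (γ - 1) + ρ x τ * (∑ k, (u₀ k) ^ 2) / 2
          + (∑ k, (B₀ k) ^ 2) / 2) t
        + (∑ j, spd (fun y => u₀ j * ((p₀ / (γ - 1) + ρ y t * (∑ k, (u₀ k) ^ 2) / 2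
              + (∑ k, (B₀ k) ^ 2) / 2) + p₀)) j x)
        - (∑ j, spd (fun y => ∑ k, u₀ k * maxwellT B₀ k j) j x)
        - (∑ j, spd (fun y => κ * spd (fun z => p₀ / ρ z t) j y) j x)
      = ∑ j, spd (fun y => κ * p₀ * (ρ y t)⁻¹ ^ 2 * spd (fun z => ρ z t) j y) j x := by
  intro x t ht
  set S := ∑ k, (u₀ k) ^ 2
  have hρ : Differentiable ℝ (fun y => ρ y t) := (hρx t).differentiable two_ne_zero
  have henergy : deriv (fun τ => p₀ / (γ - 1) + ρ x τ * S / 2 + (∑ k, (B₀ k) ^ 2) / 2) t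
      = S / 2 * deriv (fun τ => ρ x τ) t := by
    simp [mul_div_assoc, mul_comm]
  have hconv : ∀ j, spd (fun y => u₀ j * ((p₀ / (γ - 1) + ρ y t * S / 2
      + (∑ k, (B₀ k) ^ 2) / 2) + p₀)) j x = S / 2 * (spd (fun y => ρ y t) j x * u₀ j) := by
    intro j
    simp only [spd_const_mul, spd_add_const, spd_const_add, mul_div_assoc, spd_mul_const]
    ring
  have hheat : ∀ j, spd (fun y => κ * spd (fun z => p₀ / ρ z t) j y) j x
      = -spd (fun y => κ * p₀ * (ρ y t)⁻¹ ^ 2 * spd (fun z => ρ z t) j y) j x := by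
    intro j
    simp only [spd_const_div j (hρ _) (hρpos _ t).ne', ← spd_neg]
    congr 1
    ext y
    ring
  have hmass' := hmass x t ht
  simp only [spd_mul_const] at hmass'
  simp only [henergy, hconv, spd_const, hheat, ← Finset.mul_sum, Finset.sum_const_zero,
    Finset.sum_neg_distrib]
  linear_combination S / 2 * hmass'

/-- for a contact wave (constant `u₀, p₀, B₀`, density solving
`∂ₜρ + ∇·(ρu₀) = 0`), with `E := p₀/(γ−1) + ρ|u₀|²/2 + |B₀|²/2` and temperature
`T := p₀/ρ`, the residual of the resistive-MHD energy equation satisfies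
`∂ₜE + ∇·(u(E+p)) − ∇·(u·𝒯) − ∇·(κ∇T) = ∇·(κ p₀ ρ⁻² ∇ρ)` at every point; hence the
resistive flux with `κ ≠ 0` is not compatible with contact waves. -/
theorem stmt_17 {d : ℕ} (hd : 1 ≤ d) (γ κ : ℝ) (hγ : 1 < γ)
    (u₀ B₀ : Fin d → ℝ) (p₀ : ℝ)
    (ρ : (Fin d → ℝ) → ℝ → ℝ)
    (hρpos : ∀ x t, 0 < ρ x t)
    (hρx : ∀ t, ContDiff ℝ 2 fun x => ρ x t) (hρt : ∀ x, ContDiff ℝ 1 fun t => ρ x t)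
    (hmass : ∀ (x : Fin d → ℝ) (t : ℝ), 0 < t →
      deriv (fun τ => ρ x τ) t + (∑ j, spd (fun y => ρ y t * u₀ j) j x) = 0) :
    ∀ (x : Fin d → ℝ) (t : ℝ), 0 < t →
      deriv (fun τ => p₀ / (γ - 1) + ρ x τ * (∑ k, (u₀ k) ^ 2) / 2
          + (∑ k, (B₀ k) ^ 2) / 2) t
        + (∑ j, spd (fun y => u₀ j * ((p₀ / (γ - 1) + ρ y t * (∑ k, (u₀ k) ^ 2) / 2
              + (∑ k, (B₀ k) ^ 2) / 2) + p₀)) j x)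
        - (∑ j, spd (fun y => ∑ k, u₀ k * maxwellT B₀ k j) j x)
        - (∑ j, spd (fun y => κ * spd (fun z => p₀ / ρ z t) j y) j x)
      = ∑ j, spd (fun y => κ * p₀ * (ρ y t)⁻¹ ^ 2 * spd (fun z => ρ z t) j y) j x :=
  stmt_17_general γ κ u₀ B₀ p₀ ρ hρpos hρx hmass
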